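/- Lemma (color conservation in Algorithm 1): For any execution of Algorithm 1, the counts #r = |{x : color_x = r}|, #b = |{x : color_x = b}|, and #ini = |{x : color_x = ini}| are unchanged by any interaction except an interaction between the base station and an agent v satisfying depth_v = 1 and color_v = ini; such an interaction decreases #ini by one and increases exactly one of #r, #b by one (while flipping the base-station variable RB). -/

import Mathlib

/-- Agent colors of Algorithm 1. -/
inductive Col : Type
  | ini | r | b
deriving DecidableEq

/-- Base-station variable `RB`. -/
inductive RB : Type
  | r | b
deriving DecidableEq

/-- Flip the base-station variable. -/
def RB.flip : RB → RB
  | .r => .b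
  | .b => .r

/-- The color assigned by the base station. -/
def RB.toCol : RB → Col
  | .r => .r
  | .b => .b

/-- An agent state: a color and a depth (`none` is ⊥). -/
abbrev AgSt := Col × Option ℕ

/-- Effect of an interaction between the base station and one agent. -/
def bsStep (rb : RB) (a : AgSt) : RB × AgSt :=
  match a with
  | (.ini, some 1) => (rb.flip, (rb.toCol, some 1))
  | (c, none)      => (rb, (c, some 1))
  | a              => (rb, a)

/-- Effect of an interaction between two agents x and y:
first the depth propagation, then the color swap towards a smaller depth. -/
def agStep (x y : AgSt) : AgSt × AgSt :=
  let d : Option ℕ × Option ℕ :=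
    match x.2, y.2 with
    | none, some e => (some (e + 1), some e)
    | some e, none => (some e, some (e + 1))
    | dx, dy       => (dx, dy)
  match d with
  | (some dx, some dy) =>
      if dx < dy ∧ y.1 = Col.ini then ((Col.ini, some dx), (x.1, some dy))
      else if dy < dx ∧ x.1 = Col.ini then ((y.1, some dx), (Col.ini, some dy))
      else ((x.1, some dx), (y.1, some dy))
  | (dx, dy) => ((x.1, dx), (y.1, dy))

/-- A configuration: the base-station variable together with the agents' states. -/
abbrev Conf (n : ℕ) := RB × (Fin n → AgSt)

/-- One step of Algorithm 1 on a communication graph: either the base station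
interacts with an adjacent agent, or two adjacent distinct agents interact. -/
def Step {n : ℕ} (Adj : Fin n → Fin n → Prop) (BAdj : Fin n → Prop)
    (c c' : Conf n) : Prop :=
  (∃ i : Fin n, BAdj i ∧ c'.1 = (bsStep c.1 (c.2 i)).1 ∧
      c'.2 = Function.update c.2 i (bsStep c.1 (c.2 i)).2) ∨
  (c'.1 = c.1 ∧ ∃ i j : Fin n, i ≠ j ∧ Adj i j ∧
      c'.2 = Function.update (Function.update c.2 i (agStep (c.2 i) (c.2 j)).1) j
        (agStep (c.2 i) (c.2 j)).2)

/-- Number of agents whose color is `x`. -/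
def cnt {n : ℕ} (C : Fin n → AgSt) (x : Col) : ℕ :=
  (Finset.univ.filter fun a => (C a).1 = x).card

/-! The counts `cnt C x` are the multiplicities in the multiset of agent colors. Rewriting one
agent's state removes its old color from this multiset and adds the new one. An agent–agent
interaction only permutes the colors of the two agents, so the multiset does not change. A
base-station interaction keeps the agent's color, except when it recolors an `ini` agent at depth 1
with `RB.toCol`, which trades one `ini` for one `r` or one `b`. -/

def colors {n : ℕ} (C : Fin n → AgSt) : Multiset Col :=
  Finset.univ.val.map fun a => (C a).1

lemma cnt_eq_count_colors {n : ℕ} (C : Fin n → AgSt) (x : Col) :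
    cnt C x = (colors C).count x := by
  simp only [cnt, colors, Multiset.count_map, Finset.card, Finset.filter_val, eq_comm]

lemma colors_eq_cons {n : ℕ} (C : Fin n → AgSt) (i : Fin n) :
    colors C = (C i).1 ::ₘ (Finset.univ.erase i).val.map fun a => (C a).1 := by
  conv_lhs => rw [colors, ← Finset.insert_erase (Finset.mem_univ i)]
  rw [Finset.insert_val_of_notMem (Finset.notMem_erase i _), Multiset.map_cons]

lemma colors_update_add {n : ℕ} (C : Fin n → AgSt) (i : Fin n) (a : AgSt) :
    colors (Function.update C i a) + {(C i).1} = colors C + {a.1} := by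
  have hrest : ((Finset.univ.erase i).val.map fun k => (Function.update C i a k).1) =
      (Finset.univ.erase i).val.map fun k => (C k).1 :=
    Multiset.map_congr rfl fun k hk => by
      rw [Function.update_of_ne (Finset.ne_of_mem_erase (Finset.mem_val.mp hk))]
  rw [colors_eq_cons _ i, colors_eq_cons C i, hrest, Function.update_self,
    ← Multiset.singleton_add, ← Multiset.singleton_add]
  abel

lemma colors_update_of_fst_eq {n : ℕ} (C : Fin n → AgSt) (i : Fin n) (a : AgSt)
    (h : a.1 = (C i).1) : colors (Function.update C i a) = colors C :=
  add_right_cancel (by rw [colors_update_add, h])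

lemma colors_update_update_add {n : ℕ} (C : Fin n → AgSt) {i j : Fin n} (hij : i ≠ j)
    (a b : AgSt) :
    colors (Function.update (Function.update C i a) j b) + {(C i).1, (C j).1} =
      colors C + {a.1, b.1} := by
  have hj := colors_update_add (Function.update C i a) j b
  rw [Function.update_of_ne hij.symm] at hj
  simp only [Multiset.insert_eq_cons, ← Multiset.singleton_add]
  calc colors (Function.update (Function.update C i a) j b) + ({(C i).1} + {(C j).1})
      = colors (Function.update (Function.update C i a) j b) + {(C j).1} + {(C i).1} := by abel
    _ = colors (Function.update C i a) + {(C i).1} + {b.1} := by rw [hj]; abel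
    _ = colors C + ({a.1} + {b.1}) := by rw [colors_update_add]; abel

lemma bsStep_of_ne (rb : RB) (a : AgSt) (h : a ≠ (Col.ini, some 1)) :
    (bsStep rb a).1 = rb ∧ (bsStep rb a).2.1 = a.1 := by
  obtain ⟨c, d⟩ := a
  cases c <;> rcases d with _ | (_ | (_ | k)) <;>
    first | exact ⟨rfl, rfl⟩ | exact absurd rfl h

lemma agStep_colors_perm (x y : AgSt) :
    ({(agStep x y).1.1, (agStep x y).2.1} : Multiset Col) = {x.1, y.1} := by
  obtain ⟨cx, dx⟩ := x
  obtain ⟨cy, dy⟩ := y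
  unfold agStep
  rcases dx with _ | dx <;> rcases dy with _ | dy <;> dsimp <;>
    (try split_ifs) <;> simp_all <;> exact Multiset.pair_comm _ _

lemma cnt_eq_of_colors_eq {n : ℕ} {C C' : Fin n → AgSt} (h : colors C' = colors C) (x : Col) :
    cnt C' x = cnt C x := by
  simp only [cnt_eq_count_colors, h]

lemma cnt_of_colors_add_eq {n : ℕ} {C C' : Fin n → AgSt} (rb : RB)
    (h : colors C' + {Col.ini} = colors C + {rb.toCol}) :
    cnt C' .ini + 1 = cnt C .ini ∧
      ((cnt C' .r = cnt C .r + 1 ∧ cnt C' .b = cnt C .b) ∨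
       (cnt C' .b = cnt C .b + 1 ∧ cnt C' .r = cnt C .r)) := by
  have hcount (x : Col) := congrArg (Multiset.count x) h
  simp only [Multiset.count_add, Multiset.count_singleton, ← cnt_eq_count_colors] at hcount
  have hini := hcount .ini
  have hr := hcount .r
  have hb := hcount .b
  cases rb <;> simp only [RB.toCol, reduceCtorEq, if_true, if_false] at hini hr hb <;> omega

theorem stmt13 (n : ℕ) (Adj : Fin n → Fin n → Prop) (BAdj : Fin n → Prop)
    (C C' : Conf n) (hstep : Step Adj BAdj C C') :
    (cnt C'.2 .r = cnt C.2 .r ∧ cnt C'.2 .b = cnt C.2 .b ∧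
      cnt C'.2 .ini = cnt C.2 .ini ∧ C'.1 = C.1) ∨
    (∃ v : Fin n, BAdj v ∧ C.2 v = (Col.ini, some 1) ∧
      cnt C'.2 .ini + 1 = cnt C.2 .ini ∧ C'.1 = C.1.flip ∧
      ((cnt C'.2 .r = cnt C.2 .r + 1 ∧ cnt C'.2 .b = cnt C.2 .b) ∨
       (cnt C'.2 .b = cnt C.2 .b + 1 ∧ cnt C'.2 .r = cnt C.2 .r))) := by
  rcases hstep with ⟨i, hB, hrb, hC⟩ | ⟨hrb, i, j, hij, -, hC⟩
  · by_cases hv : C.2 i = (Col.ini, some 1)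
    · have hbs : bsStep C.1 (C.2 i) = (C.1.flip, (C.1.toCol, some 1)) := by rw [hv]; rfl
      have hcolors : colors C'.2 + {Col.ini} = colors C.2 + {C.1.toCol} := by
        have h := colors_update_add C.2 i (C.1.toCol, some 1)
        rw [hv] at h
        rw [hC, hbs]
        exact h
      obtain ⟨hini, hrb_counts⟩ := cnt_of_colors_add_eq C.1 hcolors
      exact Or.inr ⟨i, hB, hv, hini, hrb.trans (by rw [hbs]), hrb_counts⟩
    · obtain ⟨hrb_eq, hcol⟩ := bsStep_of_ne C.1 (C.2 i) hv
      have hcolors : colors C'.2 = colors C.2 := hC ▸ colors_update_of_fst_eq _ _ _ hcol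
      exact Or.inl ⟨cnt_eq_of_colors_eq hcolors _, cnt_eq_of_colors_eq hcolors _,
        cnt_eq_of_colors_eq hcolors _, hrb.trans hrb_eq⟩
  · have hcolors : colors C'.2 = colors C.2 := add_right_cancel <| by
      rw [hC, colors_update_update_add _ hij, agStep_colors_perm]
    exact Or.inl ⟨cnt_eq_of_colors_eq hcolors _, cnt_eq_of_colors_eq hcolors _,
      cnt_eq_of_colors_eq hcolors _, hrb⟩
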